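/- Let μ ∈ ℝ be non-integer with f = μ - ⌊μ⌋, c = ⌈μ⌉ - μ, and c ≠ f. As γ → 0⁺, the expected value of the Dalap distribution p(n|μ,γ) ∝ γ^{|n-μ|} on ℤ converges to r(μ), the integer nearest to μ; if c = f the expectation converges to μ. -/

import Mathlib

/-!
Write `k = ⌊μ⌋` and `t = γ / (1 - γ)`. Splitting `ℤ` at `k` turns `∑ γ^|n-μ| n` into two
arithmetico-geometric series, after which the Dalap mean is `w (k - t) + (1 - w) (k + 1 + t)`
with `w = γ^f / (γ^f + γ^c)`. As `γ → 0⁺` we have `t → 0`, while `w = (1 + γ^(c-f))⁻¹` tends to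
`1`, `0` or `1/2` according as `f < c`, `f > c` or `f = c`.
-/

open Filter Topology

lemma hasSum_rpow_add_mul_geometric {γ : ℝ} (h0 : 0 < γ) (h1 : γ < 1) (a b s : ℝ) :
    HasSum (fun j : ℕ => γ ^ (a + j) * (b + s * j))
      (γ ^ a / (1 - γ) * (b + s * (γ / (1 - γ)))) := by
  have geom := hasSum_geometric_of_lt_one h0.le h1
  have geom' := hasSum_coe_mul_geometric_of_norm_lt_one (𝕜 := ℝ) (r := γ)
    (by rwa [Real.norm_of_nonneg h0.le])
  have hsum : γ ^ a / (1 - γ) * (b + s * (γ / (1 - γ)))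
      = γ ^ a * (b * (1 - γ)⁻¹ + s * (γ / (1 - γ) ^ 2)) := by
    have : 1 - γ ≠ 0 := by linarith
    field_simp
  rw [hsum]
  refine (((geom.mul_left b).add (geom'.mul_left s)).mul_left (γ ^ a)).congr_fun fun j => ?_
  rw [Real.rpow_add h0, Real.rpow_natCast]
  ring

lemma hasSum_rpow_abs_sub_mul {γ μ : ℝ} (k : ℤ) (hk : k ≤ μ) (hk1 : μ ≤ k + 1)
    (h0 : 0 < γ) (h1 : γ < 1) :
    HasSum (fun n : ℤ => γ ^ |(n : ℝ) - μ| * n)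
      ((γ ^ (μ - k) * (k - γ / (1 - γ)) + γ ^ (k + 1 - μ) * (k + 1 + γ / (1 - γ))) / (1 - γ)) := by
  rw [← (Equiv.addRight (k + 1)).hasSum_iff]
  have hsum : (γ ^ (μ - k) * (k - γ / (1 - γ)) + γ ^ (k + 1 - μ) * (k + 1 + γ / (1 - γ))) / (1 - γ)
      = γ ^ (k + 1 - μ) / (1 - γ) * ((k + 1) + 1 * (γ / (1 - γ)))
        + γ ^ (μ - k) / (1 - γ) * (k + -1 * (γ / (1 - γ))) := by
    ring
  rw [hsum]
  refine HasSum.of_nat_of_neg_add_one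
    ((hasSum_rpow_add_mul_geometric h0 h1 _ _ _).congr_fun fun j => ?_)
    ((hasSum_rpow_add_mul_geometric h0 h1 _ _ _).congr_fun fun j => ?_)
  · have hj : (0 : ℝ) ≤ j := j.cast_nonneg
    simp only [Function.comp_apply, Equiv.coe_addRight]
    push_cast
    rw [abs_of_nonneg (by linarith)]
    ring_nf
  · have hj : (0 : ℝ) ≤ j := j.cast_nonneg
    simp only [Function.comp_apply, Equiv.coe_addRight]
    push_cast
    rw [abs_of_nonpos (by linarith)]
    ring_nf

lemma tendsto_rpow_div_rpow_add_rpow_of_lt {a b : ℝ} (hab : a < b) :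
    Tendsto (fun γ : ℝ => γ ^ a / (γ ^ a + γ ^ b)) (𝓝[>] 0) (𝓝 1) := by
  have hpow : Tendsto (fun γ : ℝ => γ ^ (b - a)) (𝓝[>] 0) (𝓝 0) := by
    simpa [Real.zero_rpow (sub_pos.2 hab).ne'] using
      ((Real.continuousAt_rpow_const 0 (b - a) (Or.inr (sub_pos.2 hab).le)).tendsto).mono_left
        nhdsWithin_le_nhds
  have := (tendsto_const_nhds (x := (1 : ℝ)).add hpow).inv₀ (by norm_num)
  rw [add_zero, inv_one] at this
  refine this.congr' ?_
  filter_upwards [self_mem_nhdsWithin] with γ (hγ : 0 < γ)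
  rw [Real.rpow_sub hγ]
  have := Real.rpow_pos_of_pos hγ a
  have := Real.rpow_pos_of_pos hγ b
  field_simp

lemma tendsto_rpow_div_rpow_add_rpow_of_gt {a b : ℝ} (hab : b < a) :
    Tendsto (fun γ : ℝ => γ ^ a / (γ ^ a + γ ^ b)) (𝓝[>] 0) (𝓝 0) := by
  have := (tendsto_const_nhds (x := (1 : ℝ))).sub (tendsto_rpow_div_rpow_add_rpow_of_lt hab)
  rw [sub_self] at this
  refine this.congr' ?_
  filter_upwards [self_mem_nhdsWithin] with γ (hγ : 0 < γ)
  have := Real.rpow_pos_of_pos hγ a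
  have := Real.rpow_pos_of_pos hγ b
  field_simp
  ring

lemma tsum_dalap_eq {γ μ : ℝ} (k : ℤ) (hk : k ≤ μ) (hk1 : μ ≤ k + 1) (h0 : 0 < γ) (h1 : γ < 1) :
    ∑' n : ℤ, (1 - γ) / (γ ^ (μ - k) + γ ^ (k + 1 - μ)) * γ ^ |(n : ℝ) - μ| * n
      = γ ^ (μ - k) / (γ ^ (μ - k) + γ ^ (k + 1 - μ)) * (k - γ / (1 - γ))
        + (1 - γ ^ (μ - k) / (γ ^ (μ - k) + γ ^ (k + 1 - μ))) * (k + 1 + γ / (1 - γ)) := by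
  simp_rw [mul_assoc]
  rw [((hasSum_rpow_abs_sub_mul k hk hk1 h0 h1).mul_left _).tsum_eq]
  have := Real.rpow_pos_of_pos h0 (μ - k)
  have := Real.rpow_pos_of_pos h0 (k + 1 - μ)
  have : 1 - γ ≠ 0 := by linarith
  field_simp
  ring

lemma tendsto_tsum_dalap {μ : ℝ} (k : ℤ) (hk : k ≤ μ) (hk1 : μ ≤ k + 1) {w : ℝ}
    (hw : Tendsto (fun γ : ℝ => γ ^ (μ - k) / (γ ^ (μ - k) + γ ^ (k + 1 - μ))) (𝓝[>] 0) (𝓝 w)) :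
    Tendsto (fun γ : ℝ => ∑' n : ℤ,
        (1 - γ) / (γ ^ (μ - k) + γ ^ (k + 1 - μ)) * γ ^ |(n : ℝ) - μ| * n)
      (𝓝[>] 0) (𝓝 (w * k + (1 - w) * (k + 1))) := by
  have ht : Tendsto (fun γ : ℝ => γ / (1 - γ)) (𝓝[>] 0) (𝓝 0) := by
    have : ContinuousAt (fun γ : ℝ => γ / (1 - γ)) 0 := by
      apply ContinuousAt.div <;> first | fun_prop | norm_num
    simpa using this.tendsto.mono_left nhdsWithin_le_nhds
  have hlim := (hw.mul ((tendsto_const_nhds (x := (k : ℝ))).sub ht)).add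
    (((tendsto_const_nhds (x := (1 : ℝ))).sub hw).mul
      ((tendsto_const_nhds (x := (k + 1 : ℝ))).add ht))
  rw [sub_zero, add_zero] at hlim
  refine hlim.congr' ?_
  filter_upwards [Ioo_mem_nhdsGT (zero_lt_one' ℝ)] with γ ⟨h0, h1⟩
  exact (tsum_dalap_eq k hk hk1 h0 h1).symm

theorem dalap_expectation_limit_general (μ : ℝ)
    (f c : ℝ) (hf : f = μ - ⌊μ⌋) (hc : c = (⌊μ⌋ : ℝ) + 1 - μ) :
    (c ≠ f → Tendsto
      (fun γ : ℝ => ∑' n : ℤ,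
        ((1 - γ) / (γ ^ f + γ ^ c)) * γ ^ |(n : ℝ) - μ| * (n : ℝ))
      (𝓝[>] 0) (𝓝 (if f < c then (⌊μ⌋ : ℝ) else (⌊μ⌋ : ℝ) + 1))) ∧
    (c = f → Tendsto
      (fun γ : ℝ => ∑' n : ℤ,
        ((1 - γ) / (γ ^ f + γ ^ c)) * γ ^ |(n : ℝ) - μ| * (n : ℝ))
      (𝓝[>] 0) (𝓝 μ)) := by
  subst hf hc
  have hk := Int.floor_le μ
  have hk1 := (Int.lt_floor_add_one μ).le
  refine ⟨fun hne => ?_, fun heq => ?_⟩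
  · split_ifs with hlt
    · simpa using tendsto_tsum_dalap _ hk hk1 (tendsto_rpow_div_rpow_add_rpow_of_lt hlt)
    · simpa using tendsto_tsum_dalap _ hk hk1
        (tendsto_rpow_div_rpow_add_rpow_of_gt ((not_lt.1 hlt).lt_of_ne hne))
  · have hhalf : Tendsto (fun γ : ℝ => γ ^ (μ - ⌊μ⌋) / (γ ^ (μ - ⌊μ⌋) + γ ^ (⌊μ⌋ + 1 - μ)))
        (𝓝[>] 0) (𝓝 (1 / 2)) := by
      refine tendsto_const_nhds.congr' ?_
      filter_upwards [self_mem_nhdsWithin] with γ (hγ : 0 < γ)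
      have := Real.rpow_pos_of_pos hγ (μ - ⌊μ⌋)
      rw [heq]
      field_simp
      ring
    convert tendsto_tsum_dalap _ hk hk1 hhalf using 2
    linarith

/-- As `γ → 0⁺`, the expected value of the Dalap distribution
`p(n) = ((1-γ)/(γ^f+γ^c)) γ^{|n-μ|}` on ℤ converges to the nearest integer
`r(μ)` when `c ≠ f`, and to `μ` when `c = f`. Here `μ` is non-integer,
`f = μ-⌊μ⌋`, `c = ⌈μ⌉-μ` with `⌈μ⌉ = ⌊μ⌋+1`, and `r(μ) = ⌊μ⌋` if `f < c`,
`r(μ) = ⌈μ⌉` if `f > c`. -/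
theorem dalap_expectation_limit (μ : ℝ) (hμ : ∀ m : ℤ, (m : ℝ) ≠ μ)
    (f c : ℝ) (hf : f = μ - ⌊μ⌋) (hc : c = (⌊μ⌋ : ℝ) + 1 - μ) :
    (c ≠ f → Tendsto
      (fun γ : ℝ => ∑' n : ℤ,
        ((1 - γ) / (γ ^ f + γ ^ c)) * γ ^ |(n : ℝ) - μ| * (n : ℝ))
      (𝓝[>] 0) (𝓝 (if f < c then (⌊μ⌋ : ℝ) else (⌊μ⌋ : ℝ) + 1))) ∧
    (c = f → Tendsto
      (fun γ : ℝ => ∑' n : ℤ,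
        ((1 - γ) / (γ ^ f + γ ^ c)) * γ ^ |(n : ℝ) - μ| * (n : ℝ))
      (𝓝[>] 0) (𝓝 μ)) :=
  dalap_expectation_limit_general μ f c hf hc
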